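/- (Theorem 2, Higher Upper Bound.) Let X, X₁ ∈ ℝ^{N×d}, let c > 0 (playing the role of sλ), and suppose d_𝓜(X₁) ≤ c·d_𝓜(X). Then for every ρ ∈ (0,1), the expected SkipNode output E[X₂] = (1−ρ)X₁ + ρX satisfies d_𝓜((1−ρ)X₁ + ρX) ≤ (c + ρ(1−c))·d_𝓜(X). In particular, if c < 1 then the coefficient is strictly larger: c + ρ(1−c) > c. -/

import Mathlib

/-!
The distance to a subspace `𝓜` is the quotient seminorm of the class of `X` in `ℝ^{N×d} ⧸ 𝓜`,
so it is absolutely homogeneous and subadditive. Hence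
`d_𝓜((1-ρ)X₁ + ρX) ≤ (1-ρ) d_𝓜(X₁) + ρ d_𝓜(X) ≤ ((1-ρ)c + ρ) d_𝓜(X)`.
-/

open scoped BigOperators

/-- The Frobenius norm of a real `N × d` matrix. -/
noncomputable def fNorm {N d : ℕ} (X : Matrix (Fin N) (Fin d) ℝ) : ℝ :=
  Real.sqrt (∑ i, ∑ j, (X i j) ^ 2)

/-- The distance (in Frobenius norm) from a matrix `X` to the subspace
`𝓜 = {∑ m, e m ⊗ w m | w m ∈ ℝ^d}` determined by the family `e` of vectors in `ℝ^N`. -/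
noncomputable def distM {N d M : ℕ} (e : Fin M → Fin N → ℝ)
    (X : Matrix (Fin N) (Fin d) ℝ) : ℝ :=
  sInf {r : ℝ | ∃ w : Fin M → Fin d → ℝ,
    r = fNorm (X - Matrix.of fun i j => ∑ m, e m i * w m j)}

open scoped Matrix Matrix.Norms.Frobenius

theorem fNorm_eq_norm {N d : ℕ} (X : Matrix (Fin N) (Fin d) ℝ) : fNorm X = ‖X‖ := by
  simp [fNorm, Matrix.frobenius_norm_def, Real.sqrt_eq_rpow, Real.norm_eq_abs, sq_abs]

/-- The subspace `𝓜 = {Eᵀ W}`, where the rows of `E` are the vectors `e m`. -/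
def subspaceM {N M : ℕ} (e : Fin M → Fin N → ℝ) (d : ℕ) :
    Submodule ℝ (Matrix (Fin N) (Fin d) ℝ) :=
  LinearMap.range (mulLeftLinearMap (Fin d) ℝ (Matrix.of e)ᵀ)

theorem distM_eq_norm_mk {N d M : ℕ} (e : Fin M → Fin N → ℝ) (X : Matrix (Fin N) (Fin d) ℝ) :
    distM e X = ‖Submodule.Quotient.mk (p := subspaceM e d) X‖ := by
  change _ = ‖(X : _ ⧸ (subspaceM e d).toAddSubgroup)‖
  rw [QuotientAddGroup.norm_mk, Submodule.coe_toAddSubgroup, subspaceM, LinearMap.coe_range,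
    Metric.infDist_eq_iInf, iInf_range', distM]
  congr 1
  ext r
  simp only [Set.mem_ofPred_eq, Set.mem_range, fNorm_eq_norm, dist_eq_norm, eq_comm]
  -- `∑ m, e m i * w m j` is `((of e)ᵀ * w) i j` by definition of the matrix product
  rfl

theorem distM_smul_add_smul_le {N d M : ℕ} (e : Fin M → Fin N → ℝ) (a b : ℝ)
    (X Y : Matrix (Fin N) (Fin d) ℝ) :
    distM e (a • X + b • Y) ≤ |a| * distM e X + |b| * distM e Y := by
  simp only [distM_eq_norm_mk, Submodule.Quotient.mk_add, Submodule.Quotient.mk_smul]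
  calc _ ≤ ‖a • Submodule.Quotient.mk (p := subspaceM e d) X‖
        + ‖b • Submodule.Quotient.mk (p := subspaceM e d) Y‖ := norm_add_le _ _
    _ = _ := by rw [norm_smul, norm_smul, Real.norm_eq_abs, Real.norm_eq_abs]

theorem skipNode_higher_upper_bound_general {N d M : ℕ}
    (e : Fin M → Fin N → ℝ)
    (X X₁ : Matrix (Fin N) (Fin d) ℝ) (c : ℝ)
    (hX₁ : distM e X₁ ≤ c * distM e X)
    (ρ : ℝ) (hρ0 : 0 < ρ) (hρ1 : ρ < 1) :
    distM e ((1 - ρ) • X₁ + ρ • X) ≤ (c + ρ * (1 - c)) * distM e X ∧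
      (c < 1 → c < c + ρ * (1 - c)) := by
  have hρ : 0 ≤ 1 - ρ := sub_nonneg.2 hρ1.le
  refine ⟨?_, fun hc1 => lt_add_of_pos_right c (mul_pos hρ0 (sub_pos.2 hc1))⟩
  calc distM e ((1 - ρ) • X₁ + ρ • X) ≤ (1 - ρ) * distM e X₁ + ρ * distM e X := by
        simpa only [abs_of_nonneg hρ, abs_of_pos hρ0] using distM_smul_add_smul_le e (1 - ρ) ρ X₁ X
    _ ≤ (1 - ρ) * (c * distM e X) + ρ * distM e X := by gcongr
    _ = (c + ρ * (1 - c)) * distM e X := by ring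

theorem skipNode_higher_upper_bound {N d M : ℕ} (hN : 0 < N) (hd : 0 < d)
    (hMpos : 0 < M) (hM : M < N)
    (e : Fin M → Fin N → ℝ)
    (horth : ∀ m m' : Fin M, (∑ i, e m i * e m' i) = if m = m' then 1 else 0)
    (X X₁ : Matrix (Fin N) (Fin d) ℝ) (c : ℝ) (hc : 0 < c)
    (hX₁ : distM e X₁ ≤ c * distM e X)
    (ρ : ℝ) (hρ0 : 0 < ρ) (hρ1 : ρ < 1) :
    distM e ((1 - ρ) • X₁ + ρ • X) ≤ (c + ρ * (1 - c)) * distM e X ∧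
      (c < 1 → c < c + ρ * (1 - c)) :=
  skipNode_higher_upper_bound_general e X X₁ c hX₁ ρ hρ0 hρ1
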